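/- Let T be compact, Σ : T → ℝ^{k×k} continuous with Σ(t) symmetric positive definite for all t, H ∈ ℝ^{r×k}, and let Σ_n : T → ℝ^{k×k} be functions with sup_{t∈T} |||Σ_n(t) − Σ(t)||| → 0 and each Σ_n(t) symmetric positive semidefinite. Then sup_{t∈T} ||| (H Σ_n(t) Hᵀ)⁺ − (H Σ(t) Hᵀ)⁺ ||| → 0 as n → ∞. -/

import Mathlib

open Matrix Filter

/-- `P` is the Moore–Penrose pseudoinverse of `B` (the four Penrose conditions). -/
def IsMoorePenrose {r k : ℕ} (B : Matrix (Fin r) (Fin k) ℝ)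
    (P : Matrix (Fin k) (Fin r) ℝ) : Prop :=
  B * P * B = B ∧ P * B * P = P ∧ (B * P)ᵀ = B * P ∧ (P * B)ᵀ = P * B

/-- The Moore–Penrose pseudoinverse is unique. -/
theorem PinvAux.mp_unique {r k : ℕ} {B : Matrix (Fin r) (Fin k) ℝ}
    {P P' : Matrix (Fin k) (Fin r) ℝ}
    (h : IsMoorePenrose B P) (h' : IsMoorePenrose B P') : P = P' := by
  obtain ⟨h1, h2, h3, h4⟩ := h
  obtain ⟨h1', h2', h3', h4'⟩ := h'
  have hBP : B * P = B * P' := by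
    calc B * P = (B * P' * B) * P := by rw [h1']
    _ = (B * P') * (B * P) := by rw [Matrix.mul_assoc (B * P') B P]
    _ = (B * P')ᵀ * (B * P)ᵀ := by rw [h3, h3']
    _ = ((B * P) * (B * P'))ᵀ := (Matrix.transpose_mul _ _).symm
    _ = ((B * P * B) * P')ᵀ := by rw [Matrix.mul_assoc (B * P) B P']
    _ = (B * P')ᵀ := by rw [h1]
    _ = B * P' := h3'
  have hPB : P * B = P' * B := by
    calc P * B = P * (B * P' * B) := by rw [h1']
    _ = (P * B) * (P' * B) := by
        rw [Matrix.mul_assoc B P' B, ← Matrix.mul_assoc P B (P' * B)]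
    _ = (P * B)ᵀ * (P' * B)ᵀ := by rw [h4, h4']
    _ = ((P' * B) * (P * B))ᵀ := (Matrix.transpose_mul _ _).symm
    _ = (P' * (B * P * B))ᵀ := by
        rw [Matrix.mul_assoc P' B (P * B), Matrix.mul_assoc B P B]
    _ = (P' * B)ᵀ := by rw [h1]
    _ = P' * B := h4'
  calc P = P * B * P := h2.symm
  _ = P' * B * P := by rw [hPB]
  _ = P' * (B * P) := by rw [Matrix.mul_assoc]
  _ = P' * (B * P') := by rw [hBP]
  _ = P' * B * P' := by rw [Matrix.mul_assoc]
  _ = P' := h2'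

/-- Composition of a uniformly convergent family with a function continuous on an open
neighborhood of the image of the limit. -/
theorem PinvAux.tuo_comp {α β γ : Type*} [TopologicalSpace α] [MetricSpace β] [ProperSpace β]
    [MetricSpace γ] {F : ℕ → α → β} {f : α → β} {s : Set α}
    (hF : TendstoUniformlyOn F f atTop s) (hf : ContinuousOn f s) (hs : IsCompact s)
    {U : Set β} (hU : IsOpen U) (hfU : ∀ x ∈ s, f x ∈ U)
    {g : β → γ} (hg : ContinuousOn g U) :
    TendstoUniformlyOn (fun n x => g (F n x)) (fun x => g (f x)) atTop s := by
  have hK : IsCompact (f '' s) := hs.image_of_continuousOn hf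
  obtain ⟨δ₀, hδ₀, hsub⟩ := hK.exists_cthickening_subset_open hU (by
    rintro _ ⟨x, hx, rfl⟩; exact hfU x hx)
  have hK' : IsCompact (Metric.cthickening δ₀ (f '' s)) := hK.cthickening
  have huc : UniformContinuousOn g (Metric.cthickening δ₀ (f '' s)) :=
    hK'.uniformContinuousOn_of_continuous (hg.mono hsub)
  rw [Metric.tendstoUniformlyOn_iff] at hF ⊢
  intro ε hε
  rw [Metric.uniformContinuousOn_iff] at huc
  obtain ⟨δ, hδ, hd⟩ := huc ε hε
  filter_upwards [hF (min δ δ₀) (lt_min hδ hδ₀)] with n hn x hx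
  have h1 := hn x hx
  have hfx : f x ∈ Metric.cthickening δ₀ (f '' s) :=
    Metric.self_subset_cthickening _ ⟨x, hx, rfl⟩
  have hFx : F n x ∈ Metric.cthickening δ₀ (f '' s) := by
    refine Metric.mem_cthickening_of_dist_le (F n x) (f x) δ₀ (f '' s) ⟨x, hx, rfl⟩ ?_
    rw [dist_comm]
    exact (le_of_lt h1).trans (min_le_right _ _)
  exact hd _ hfx _ hFx (lt_of_lt_of_le h1 (min_le_left _ _))

/-- If `M` is positive definite and `(H M Hᵀ) x = 0` then `Hᵀ x = 0`. -/
theorem PinvAux.ker_lemma {r k : ℕ} {M : Matrix (Fin k) (Fin k) ℝ} (hM : M.PosDef)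
    (H : Matrix (Fin r) (Fin k) ℝ) {x : Fin r → ℝ}
    (hx : (H * M * Hᵀ) *ᵥ x = 0) : Hᵀ *ᵥ x = 0 := by
  by_contra h
  have hpos := hM.dotProduct_mulVec_pos h
  have hzero : star (Hᵀ *ᵥ x) ⬝ᵥ (M *ᵥ (Hᵀ *ᵥ x)) = 0 := by
    have h1 : (H * M * Hᵀ) *ᵥ x = H *ᵥ (M *ᵥ (Hᵀ *ᵥ x)) := by
      rw [← Matrix.mulVec_mulVec, ← Matrix.mulVec_mulVec]
    have h2 : x ⬝ᵥ ((H * M * Hᵀ) *ᵥ x) = 0 := by rw [hx, dotProduct_zero]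
    rw [h1, Matrix.dotProduct_mulVec x H] at h2
    have h3 : x ᵥ* H = Hᵀ *ᵥ x := (Matrix.mulVec_transpose H x).symm
    rw [h3] at h2
    simpa using h2
  rw [hzero] at hpos
  exact lt_irrefl 0 hpos

/-- A positive semidefinite real matrix with nonzero determinant is positive definite. -/
theorem PinvAux.posDef_of_det {k : ℕ} {M : Matrix (Fin k) (Fin k) ℝ} (h : M.PosSemidef)
    (hd : M.det ≠ 0) : M.PosDef := by
  refine Matrix.PosDef.of_dotProduct_mulVec_pos h.1 (fun x hx => ?_)
  rcases (h.dotProduct_mulVec_nonneg x).lt_or_eq with hlt | heq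
  · exact hlt
  · exfalso
    apply hd
    rw [← Matrix.exists_mulVec_eq_zero_iff]
    exact ⟨x, hx, (h.dotProduct_mulVec_zero_iff x).mp heq.symm⟩

/-- `H M Hᵀ + E` is positive definite when `M` is positive definite and `E` is the
orthogonal projection onto the kernel of `Hᵀ`. -/
theorem PinvAux.key_pd {r k : ℕ} {M : Matrix (Fin k) (Fin k) ℝ} (hM : M.PosDef)
    (H : Matrix (Fin r) (Fin k) ℝ) {E : Matrix (Fin r) (Fin r) ℝ}
    (hEt : Eᵀ = E) (hEE : E * E = E)
    (hEx : ∀ x : Fin r → ℝ, Hᵀ *ᵥ x = 0 → E *ᵥ x = x) :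
    (H * M * Hᵀ + E).PosDef := by
  have hMt : Mᵀ = M := by
    have := hM.1
    rwa [Matrix.IsHermitian, Matrix.conjTranspose_eq_transpose_of_trivial] at this
  refine Matrix.PosDef.of_dotProduct_mulVec_pos ?_ ?_
  · show (H * M * Hᵀ + E)ᴴ = _
    rw [Matrix.conjTranspose_eq_transpose_of_trivial, Matrix.transpose_add,
      Matrix.transpose_mul, Matrix.transpose_mul, Matrix.transpose_transpose, hMt, hEt,
      Matrix.mul_assoc]
  · intro x hx
    have hsplit : star x ⬝ᵥ ((H * M * Hᵀ + E) *ᵥ x)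
        = star (Hᵀ *ᵥ x) ⬝ᵥ (M *ᵥ (Hᵀ *ᵥ x)) + (E *ᵥ x) ⬝ᵥ (E *ᵥ x) := by
      rw [Matrix.add_mulVec, dotProduct_add]
      congr 1
      · have h1 : (H * M * Hᵀ) *ᵥ x = H *ᵥ (M *ᵥ (Hᵀ *ᵥ x)) := by
          rw [← Matrix.mulVec_mulVec, ← Matrix.mulVec_mulVec]
        rw [h1]
        simp only [star_trivial]
        rw [Matrix.dotProduct_mulVec x H, ← Matrix.mulVec_transpose]
      · simp only [star_trivial]
        conv_lhs => rw [← hEE, ← Matrix.mulVec_mulVec, Matrix.dotProduct_mulVec x E,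
          ← hEt, Matrix.vecMul_transpose, hEt]
    rw [hsplit]
    by_cases hy : Hᵀ *ᵥ x = 0
    · have hExx := hEx x hy
      rw [hy, Matrix.mulVec_zero, dotProduct_zero, hExx]
      have : x ⬝ᵥ x ≠ 0 := fun hc => hx (dotProduct_self_eq_zero.mp hc)
      have hnn : 0 ≤ x ⬝ᵥ x := Finset.sum_nonneg fun i _ => mul_self_nonneg (x i)
      simpa using lt_of_le_of_ne hnn (Ne.symm this)
    · have h1 := hM.dotProduct_mulVec_pos hy
      have h2 : 0 ≤ (E *ᵥ x) ⬝ᵥ (E *ᵥ x) :=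
        Finset.sum_nonneg fun i _ => mul_self_nonneg _
      linarith [h1, h2]

/-- An explicit formula for the Moore–Penrose pseudoinverse. -/
theorem PinvAux.mp_formula {r : ℕ} {A E : Matrix (Fin r) (Fin r) ℝ}
    (hAE : A * E = 0) (hEA : E * A = 0) (hEE : E * E = E)
    (hB : IsUnit (A + E)) (hEt : Eᵀ = E) :
    IsMoorePenrose A (Ring.inverse (A + E) - E) := by
  set B := A + E with hBdef
  have hdet : IsUnit B.det := (Matrix.isUnit_iff_isUnit_det B).mp hB
  have hBi : B * B⁻¹ = 1 := Matrix.mul_nonsing_inv B hdet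
  have hiB : B⁻¹ * B = 1 := Matrix.nonsing_inv_mul B hdet
  have hre : Ring.inverse B = B⁻¹ := (Matrix.nonsing_inv_eq_ringInverse B).symm
  rw [hre]
  have hBE : B * E = E := by rw [hBdef, Matrix.add_mul, hAE, hEE, zero_add]
  have hEB : E * B = E := by rw [hBdef, Matrix.mul_add, hEA, hEE, zero_add]
  have hEBi : E * B⁻¹ = E := by
    calc E * B⁻¹ = (E * B) * B⁻¹ := by rw [hEB]
    _ = E * (B * B⁻¹) := by rw [Matrix.mul_assoc]
    _ = E := by rw [hBi, Matrix.mul_one]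
  have hBiE : B⁻¹ * E = E := by
    calc B⁻¹ * E = B⁻¹ * (B * E) := by rw [hBE]
    _ = (B⁻¹ * B) * E := by rw [Matrix.mul_assoc]
    _ = E := by rw [hiB, Matrix.one_mul]
  have hA : A = B - E := by rw [hBdef, add_sub_cancel_right]
  have hAP : A * (B⁻¹ - E) = 1 - E := by
    rw [Matrix.mul_sub, hAE, sub_zero, hA, Matrix.sub_mul, hBi, hEBi]
  have hPA : (B⁻¹ - E) * A = 1 - E := by
    rw [Matrix.sub_mul, hEA, sub_zero, hA, Matrix.mul_sub, hiB, hBiE]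
  refine ⟨?_, ?_, ?_, ?_⟩
  · rw [hAP, Matrix.sub_mul, Matrix.one_mul, hEA, sub_zero]
  · rw [hPA, Matrix.sub_mul, Matrix.one_mul, Matrix.mul_sub, hEBi, hEE, sub_self, sub_zero]
  · rw [hAP, Matrix.transpose_sub, Matrix.transpose_one, hEt]
  · rw [hPA, Matrix.transpose_sub, Matrix.transpose_one, hEt]

section NormedLemmas

attribute [local instance] Matrix.linftyOpNormedAddCommGroup Matrix.linftyOpNormedRing
  Matrix.linftyOpNormedAlgebra Matrix.linftyOpNormedSpace

/-- Uniform convergence of determinants. -/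
theorem PinvAux.det_tuo {k : ℕ} {Sn : ℕ → ℝ → Matrix (Fin k) (Fin k) ℝ}
    {S : ℝ → Matrix (Fin k) (Fin k) ℝ} {T : Set ℝ} (hTc : IsCompact T)
    (hconv : TendstoUniformlyOn Sn S atTop T) (hcont : ContinuousOn S T) :
    TendstoUniformlyOn (fun n t => (Sn n t).det) (fun t => (S t).det) atTop T :=
  PinvAux.tuo_comp hconv hcont hTc isOpen_univ (fun _ _ => Set.mem_univ _)
    (Continuous.matrix_det continuous_id).continuousOn

/-- Uniform convergence of `H · Hᵀ + E`. -/
theorem PinvAux.conj_tuo {r k : ℕ} (H : Matrix (Fin r) (Fin k) ℝ)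
    (E : Matrix (Fin r) (Fin r) ℝ) {Sn : ℕ → ℝ → Matrix (Fin k) (Fin k) ℝ}
    {S : ℝ → Matrix (Fin k) (Fin k) ℝ} {T : Set ℝ} (hTc : IsCompact T)
    (hconv : TendstoUniformlyOn Sn S atTop T) (hcont : ContinuousOn S T) :
    TendstoUniformlyOn (fun n t => H * Sn n t * Hᵀ + E) (fun t => H * S t * Hᵀ + E) atTop T :=
  PinvAux.tuo_comp (g := fun M => H * M * Hᵀ + E) hconv hcont hTc isOpen_univ
    (fun _ _ => Set.mem_univ _)
    (((continuous_const.matrix_mul continuous_id).matrix_mul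
      continuous_const).add continuous_const).continuousOn

/-- Uniform convergence of `Ring.inverse · - E` along a family of units. -/
theorem PinvAux.inv_tuo {r : ℕ} {F : ℕ → ℝ → Matrix (Fin r) (Fin r) ℝ}
    {f : ℝ → Matrix (Fin r) (Fin r) ℝ} {T : Set ℝ} (hTc : IsCompact T)
    (hF : TendstoUniformlyOn F f atTop T) (hf : ContinuousOn f T)
    (hu : ∀ t ∈ T, IsUnit (f t)) (E : Matrix (Fin r) (Fin r) ℝ) :
    TendstoUniformlyOn (fun n t => Ring.inverse (F n t) - E)
      (fun t => Ring.inverse (f t) - E) atTop T := by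
  refine PinvAux.tuo_comp hF hf hTc Units.isOpen hu
    (g := fun M => Ring.inverse M - E) ?_
  exact ContinuousOn.sub
    (fun x hx => (NormedRing.inverse_continuousAt hx.unit).continuousWithinAt)
    continuousOn_const

end NormedLemmas

/-- If `Σ_n → Σ` uniformly on the compact interval `T`, where `Σ(t)` is symmetric positive
definite and `Σ_n(t)` symmetric positive semidefinite, then the Moore–Penrose pseudoinverses
`(H Σ_n(t) Hᵀ)⁺` converge uniformly on `T` to `(H Σ(t) Hᵀ)⁺`. -/
theorem tendstoUniformlyOn_pinv_conj
    {r k : ℕ} (a b : ℝ) (S : ℝ → Matrix (Fin k) (Fin k) ℝ)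
    (Sn : ℕ → ℝ → Matrix (Fin k) (Fin k) ℝ)
    (H : Matrix (Fin r) (Fin k) ℝ)
    (hcont : ContinuousOn S (Set.Icc a b))
    (hpd : ∀ t ∈ Set.Icc a b, (S t).PosDef)
    (hpsd : ∀ n, ∀ t ∈ Set.Icc a b, (Sn n t).PosSemidef)
    (hconv : TendstoUniformlyOn Sn S atTop (Set.Icc a b))
    (P : ℕ → ℝ → Matrix (Fin r) (Fin r) ℝ) (Q : ℝ → Matrix (Fin r) (Fin r) ℝ)
    (hP : ∀ n, ∀ t ∈ Set.Icc a b, IsMoorePenrose (H * Sn n t * Hᵀ) (P n t))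
    (hQ : ∀ t ∈ Set.Icc a b, IsMoorePenrose (H * S t * Hᵀ) (Q t)) :
    TendstoUniformlyOn P Q atTop (Set.Icc a b) := by
  rcases Set.eq_empty_or_nonempty (Set.Icc a b) with hemp | hne
  · rw [hemp]; exact tendstoUniformlyOn_empty
  have hab : a ≤ b := by
    obtain ⟨t, ht⟩ := hne; exact le_trans ht.1 ht.2
  have ha : a ∈ Set.Icc a b := Set.mem_Icc.mpr ⟨le_rfl, hab⟩
  obtain ⟨q1, q2, q3, q4⟩ := hQ a ha
  set T := Set.Icc a b with hTdef
  have hTc : IsCompact T := isCompact_Icc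
  set Aa : Matrix (Fin r) (Fin r) ℝ := H * S a * Hᵀ with hAa
  set E : Matrix (Fin r) (Fin r) ℝ := 1 - Q a * Aa with hEdef
  -- basic properties of `E = 1 - Π`
  have hPiT : (Q a * Aa)ᵀ = Q a * Aa := q4
  have hPiPi : (Q a * Aa) * (Q a * Aa) = Q a * Aa := by
    calc (Q a * Aa) * (Q a * Aa) = Q a * (Aa * Q a * Aa) := by
          rw [Matrix.mul_assoc (Q a) Aa (Q a * Aa), ← Matrix.mul_assoc Aa (Q a) Aa]
    _ = Q a * Aa := by rw [q1]
  have hEt : Eᵀ = E := by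
    rw [hEdef, Matrix.transpose_sub, Matrix.transpose_one, hPiT]
  have hEE : E * E = E := by
    rw [hEdef, Matrix.mul_sub, Matrix.sub_mul, Matrix.sub_mul]
    simp only [Matrix.one_mul, Matrix.mul_one]
    rw [hPiPi]
    abel
  have hAaE : Aa * E = 0 := by
    rw [hEdef, Matrix.mul_sub, Matrix.mul_one, ← Matrix.mul_assoc Aa (Q a) Aa, q1, sub_self]
  -- kernel facts
  have hHtEv : ∀ x : Fin r → ℝ, Hᵀ *ᵥ (E *ᵥ x) = 0 := by
    intro x
    refine PinvAux.ker_lemma (hpd a ha) H (x := E *ᵥ x) ?_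
    rw [← hAa, Matrix.mulVec_mulVec, hAaE, Matrix.zero_mulVec]
  have hHtE : Hᵀ * E = 0 := by
    ext i j
    have h2 : (Hᵀ * E) *ᵥ Pi.single j 1 = 0 := by
      rw [← Matrix.mulVec_mulVec]; exact hHtEv _
    have h3 := congrFun h2 i
    rw [Matrix.mulVec_single_one] at h3
    simpa [Matrix.transpose_apply] using h3
  have hA'E : ∀ M : Matrix (Fin k) (Fin k) ℝ, (H * M * Hᵀ) * E = 0 := by
    intro M
    rw [Matrix.mul_assoc (H * M) Hᵀ E, hHtE, Matrix.mul_zero]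
  have hEA' : ∀ M : Matrix (Fin k) (Fin k) ℝ, Mᵀ = M → E * (H * M * Hᵀ) = 0 := by
    intro M hMt
    have h := congrArg Matrix.transpose (hA'E M)
    rw [Matrix.transpose_mul, Matrix.transpose_mul, Matrix.transpose_mul,
      Matrix.transpose_transpose, hEt, hMt, Matrix.transpose_zero] at h
    rw [Matrix.mul_assoc H M Hᵀ]
    exact h
  have hEx : ∀ x : Fin r → ℝ, Hᵀ *ᵥ x = 0 → E *ᵥ x = x := by
    intro x hx
    rw [hEdef, Matrix.sub_mulVec, Matrix.one_mulVec]
    have hz : (Q a * Aa) *ᵥ x = 0 := by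
      rw [hAa, ← Matrix.mulVec_mulVec, ← Matrix.mulVec_mulVec, ← Matrix.mulVec_mulVec,
        hx, Matrix.mulVec_zero, Matrix.mulVec_zero, Matrix.mulVec_zero]
    rw [hz, sub_zero]
  -- symmetry
  have hSt : ∀ t ∈ T, (S t)ᵀ = S t := by
    intro t ht
    have h := (hpd t ht).1
    rwa [Matrix.IsHermitian, Matrix.conjTranspose_eq_transpose_of_trivial] at h
  have hSnt : ∀ n, ∀ t ∈ T, (Sn n t)ᵀ = Sn n t := by
    intro n t ht
    have h := (hpsd n t ht).1
    rwa [Matrix.IsHermitian, Matrix.conjTranspose_eq_transpose_of_trivial] at h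
  -- invertibility of the limit matrices
  have hUnit : ∀ t ∈ T, IsUnit (H * S t * Hᵀ + E) := fun t ht =>
    (PinvAux.key_pd (hpd t ht) H hEt hEE hEx).isUnit
  -- formula for Q
  have hQeq : ∀ t ∈ T, Q t = Ring.inverse (H * S t * Hᵀ + E) - E := fun t ht =>
    PinvAux.mp_unique (hQ t ht)
      (PinvAux.mp_formula (hA'E (S t)) (hEA' (S t) (hSt t ht)) hEE (hUnit t ht) hEt)
  -- continuity of the limit
  have hfcont : ContinuousOn (fun t => H * S t * Hᵀ + E) T := by
    have cg : Continuous (fun M : Matrix (Fin k) (Fin k) ℝ => H * M * Hᵀ + E) :=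
      (((continuous_const.matrix_mul continuous_id).matrix_mul
        continuous_const).add continuous_const)
    exact cg.comp_continuousOn hcont
  -- eventual positive definiteness of `Sn n t`
  have hdetcont : ContinuousOn (fun t => (S t).det) T :=
    (Continuous.matrix_det continuous_id).comp_continuousOn hcont
  obtain ⟨t₀, ht₀, hmin⟩ := hTc.exists_isMinOn hne hdetcont
  have hd0 : 0 < (S t₀).det := (hpd t₀ ht₀).det_pos
  have hdetconv := PinvAux.det_tuo hTc hconv hcont
  rw [Metric.tendstoUniformlyOn_iff] at hdetconv
  have hev : ∀ᶠ n in atTop, ∀ t ∈ T, (Sn n t).PosDef := by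
    filter_upwards [hdetconv ((S t₀).det) hd0] with n hn t ht
    have h1 := hn t ht
    refine PinvAux.posDef_of_det (hpsd n t ht) ?_
    have h2 : (S t₀).det ≤ (S t).det := hmin ht
    rw [Real.dist_eq] at h1
    have h3 := abs_lt.mp h1
    have : 0 < (Sn n t).det := by linarith [h3.1, h3.2]
    exact this.ne'
  -- eventual formula for P
  have hPev : ∀ᶠ n in atTop, ∀ t ∈ T,
      P n t = Ring.inverse (H * Sn n t * Hᵀ + E) - E := by
    filter_upwards [hev] with n hn t ht
    exact PinvAux.mp_unique (hP n t ht)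
      (PinvAux.mp_formula (hA'E _) (hEA' _ (hSnt n t ht)) hEE
        ((PinvAux.key_pd (hn t ht) H hEt hEE hEx).isUnit) hEt)
  -- uniform convergence of the explicit formulas
  have hBn := PinvAux.conj_tuo H E hTc hconv hcont
  have hRconv := PinvAux.inv_tuo hTc hBn hfcont hUnit E
  refine (hRconv.congr ?_).congr_right ?_
  · filter_upwards [hPev] with n hn t ht
    exact (hn t ht).symm
  · intro t ht
    exact (hQeq t ht).symm
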